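/- arXiv:2204.09305 — 5 statements merged into one kernel-verified Lean document; each statement's English description precedes it below -/
import Mathlib

section
/- Let a_n ≥ 0 and b_n ≥ 0 be sequences with ∑ b_n divergent, and suppose both power series f(x) = ∑ a_n x^n and g(x) = ∑ b_n x^n converge for |x| < 1. If a_n / b_n → C as n → ∞ (with b_n eventually positive), then f(x)/g(x) → C as x → 1⁻. -/
/-!
Writing `a n - C * b n = o(b n)`, the difference `f - C g` is a power series whose coefficients
are eventually at most `ε b n` in absolute value, so on `(0, 1)` it is bounded by a constant
(the first few coefficients) plus `ε g`. Since `∑ b n = ∞` forces `g(x) → ∞` as `x → 1⁻`, the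
constant is eventually absorbed, giving `f - C g = o(g)` and hence `f / g → C`.
-/

open Filter Topology Asymptotics Set

theorem Asymptotics.isLittleO_sub_mul_of_tendsto_div {α 𝕜 : Type*} [NormedField 𝕜] {l : Filter α}
    {a b : α → 𝕜} {C : 𝕜} (hb : ∀ᶠ n in l, b n ≠ 0) (h : Tendsto (fun n => a n / b n) l (𝓝 C)) :
    (fun n => a n - C * b n) =o[l] b := by
  rw [isLittleO_iff_tendsto' (hb.mono fun n hn h0 => absurd h0 hn)]
  refine (tendsto_sub_nhds_zero_iff.2 h).congr' ?_
  filter_upwards [hb] with n hn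
  rw [sub_div, mul_div_cancel_right₀ C hn]

theorem tendsto_atTop_of_hasSum_mul_pow {b : ℕ → ℝ} {G : ℝ → ℝ} (hb : ∀ n, 0 ≤ b n)
    (hbdiv : ¬ Summable b) (hG : ∀ x ∈ Ioo 0 1, HasSum (fun n => b n * x ^ n) (G x)) :
    Tendsto G (𝓝[<] 1) atTop := by
  refine tendsto_atTop.2 fun M => ?_
  obtain ⟨K, hK⟩ : ∃ K, M < ∑ i ∈ Finset.range K, b i :=
    (((not_summable_iff_tendsto_nat_atTop_of_nonneg hb).1 hbdiv).eventually_gt_atTop M).exists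
  have hpoly : Tendsto (fun x : ℝ => ∑ i ∈ Finset.range K, b i * x ^ i) (𝓝[<] 1)
      (𝓝 (∑ i ∈ Finset.range K, b i)) := by
    have hcont : Continuous fun x : ℝ => ∑ i ∈ Finset.range K, b i * x ^ i := by fun_prop
    simpa using (hcont.tendsto 1).mono_left nhdsWithin_le_nhds
  filter_upwards [hpoly.eventually (eventually_ge_nhds hK), Ioo_mem_nhdsLT zero_lt_one]
    with x hMx hx
  exact hMx.trans <|
    sum_le_hasSum _ (fun i _ => mul_nonneg (hb i) (pow_nonneg hx.1.le i)) (hG x hx)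

theorem abs_le_of_hasSum_mul_pow {b c : ℕ → ℝ} {x ε F G : ℝ} {N : ℕ} (hb : ∀ n, 0 ≤ b n)
    (hε : 0 ≤ ε) (hcb : ∀ n ≥ N, |c n| ≤ ε * b n) (hx : x ∈ Icc 0 1)
    (hF : HasSum (fun n => c n * x ^ n) F) (hG : HasSum (fun n => b n * x ^ n) G) :
    |F| ≤ ∑ n ∈ Finset.range N, |c n| + ε * G := by
  set head : ℕ → ℝ := (Finset.range N : Set ℕ).indicator fun n => |c n|
  have hhead : HasSum head (∑ n ∈ Finset.range N, |c n|) :=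
    hasSum_subtype_iff_indicator.1 (Finset.hasSum _ _)
  have hterm : ∀ n, |c n * x ^ n| ≤ head n + ε * (b n * x ^ n) := by
    intro n
    have hxn : 0 ≤ x ^ n := pow_nonneg hx.1 n
    rw [abs_mul, abs_of_nonneg hxn]
    by_cases hn : n < N
    · simp only [head, Finset.coe_range, Set.indicator_of_mem (Set.mem_Iio.2 hn)]
      nlinarith [pow_le_one₀ hx.1 hx.2 (n := n), abs_nonneg (c n),
        mul_nonneg hε (mul_nonneg (hb n) hxn)]
    · simp only [head, Finset.coe_range, Set.indicator_of_notMem (fun h => hn (Set.mem_Iio.1 h)),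
        zero_add, ← mul_assoc]
      exact mul_le_mul_of_nonneg_right (hcb n (not_lt.1 hn)) hxn
  have hbound := hhead.add (hG.mul_left ε)
  exact abs_le.2 ⟨by simpa using hasSum_le (fun n => neg_le_of_abs_le (hterm n)) hbound.neg hF,
    hasSum_le (fun n => le_of_abs_le (hterm n)) hF hbound⟩

theorem isLittleO_nhdsLT_of_hasSum_mul_pow {b c : ℕ → ℝ} {F G : ℝ → ℝ} (hb : ∀ n, 0 ≤ b n)
    (hcb : c =o[atTop] b) (hF : ∀ x ∈ Ioo 0 1, HasSum (fun n => c n * x ^ n) (F x))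
    (hG : ∀ x ∈ Ioo 0 1, HasSum (fun n => b n * x ^ n) (G x)) (hGtop : Tendsto G (𝓝[<] 1) atTop) :
    F =o[𝓝[<] 1] G := by
  refine isLittleO_iff.2 fun ε hε => ?_
  obtain ⟨N, hN⟩ := eventually_atTop.1 (hcb.def (half_pos hε))
  set M := ∑ n ∈ Finset.range N, |c n|
  filter_upwards [hGtop.eventually_ge_atTop (2 * M / ε), Ioo_mem_nhdsLT zero_lt_one]
    with x hMx hx
  have hFx := abs_le_of_hasSum_mul_pow hb (half_pos hε).le
    (fun n hn => by simpa [abs_of_nonneg (hb n)] using hN n hn) (Ioo_subset_Icc_self hx)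
    (hF x hx) (hG x hx)
  have hM : M ≤ ε / 2 * G x := by
    calc M = ε / 2 * (2 * M / ε) := by field_simp
      _ ≤ ε / 2 * G x := by gcongr
  rw [Real.norm_eq_abs, Real.norm_eq_abs, abs_of_nonneg ((hG x hx).nonneg fun n =>
    mul_nonneg (hb n) (pow_nonneg hx.1.le n))]
  linarith

theorem stmt_2_general (a b : ℕ → ℝ) (C : ℝ)
    (hb : ∀ n, 0 ≤ b n)
    (hbdiv : ¬ Summable b)
    (hbpos : ∀ᶠ n in Filter.atTop, 0 < b n)
    (hfa : ∀ x ∈ Set.Ioo (-1 : ℝ) 1, Summable (fun n => a n * x ^ n))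
    (hfb : ∀ x ∈ Set.Ioo (-1 : ℝ) 1, Summable (fun n => b n * x ^ n))
    (hC : Filter.Tendsto (fun n => a n / b n) Filter.atTop (nhds C)) :
    Filter.Tendsto (fun x : ℝ => (∑' n, a n * x ^ n) / (∑' n, b n * x ^ n))
      (nhdsWithin 1 (Set.Iio 1)) (nhds C) := by
  set f := fun x : ℝ => ∑' n, a n * x ^ n
  set g := fun x : ℝ => ∑' n, b n * x ^ n
  have hsub : Ioo (0 : ℝ) 1 ⊆ Ioo (-1) 1 := Ioo_subset_Ioo_left (by norm_num)
  have hf : ∀ x ∈ Ioo 0 1, HasSum (fun n => a n * x ^ n) (f x) :=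
    fun x hx => (hfa x (hsub hx)).hasSum
  have hg : ∀ x ∈ Ioo 0 1, HasSum (fun n => b n * x ^ n) (g x) :=
    fun x hx => (hfb x (hsub hx)).hasSum
  have hgtop := tendsto_atTop_of_hasSum_mul_pow hb hbdiv hg
  have hlo : (fun x => f x - C * g x) =o[𝓝[<] 1] g :=
    isLittleO_nhdsLT_of_hasSum_mul_pow hb
      (isLittleO_sub_mul_of_tendsto_div (hbpos.mono fun n hn => hn.ne') hC)
      (fun x hx => by simpa only [sub_mul, mul_assoc] using (hf x hx).sub ((hg x hx).mul_left C))
      hg hgtop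
  refine (zero_add C ▸ hlo.tendsto_div_nhds_zero.add_const C).congr' ?_
  filter_upwards [hgtop.eventually_gt_atTop 0] with x hx
  rw [sub_div, mul_div_cancel_right₀ _ hx.ne', sub_add_cancel]

/-- Titchmarsh's Abelian theorem: if `a_n ≥ 0`, `b_n ≥ 0`, `∑ b_n` diverges,
both power series converge on `(-1,1)`, `b_n` is eventually positive and
`a_n / b_n → C`, then `f(x)/g(x) → C` as `x → 1⁻`. -/
theorem stmt_2 (a b : ℕ → ℝ) (C : ℝ)
    (ha : ∀ n, 0 ≤ a n) (hb : ∀ n, 0 ≤ b n)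
    (hbdiv : ¬ Summable b)
    (hbpos : ∀ᶠ n in Filter.atTop, 0 < b n)
    (hfa : ∀ x ∈ Set.Ioo (-1 : ℝ) 1, Summable (fun n => a n * x ^ n))
    (hfb : ∀ x ∈ Set.Ioo (-1 : ℝ) 1, Summable (fun n => b n * x ^ n))
    (hC : Filter.Tendsto (fun n => a n / b n) Filter.atTop (nhds C)) :
    Filter.Tendsto (fun x : ℝ => (∑' n, a n * x ^ n) / (∑' n, b n * x ^ n))
      (nhdsWithin 1 (Set.Iio 1)) (nhds C) :=
  stmt_2_general a b C hb hbdiv hbpos hfa hfb hC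
end

section
/- For a complex constant α not a nonnegative integer, (-1)^n C(α, n) ~ n^{-α-1} / Γ(-α) as n → ∞; that is, the ratio of (-1)^n C(α,n) to n^{-α-1}/Γ(-α) tends to 1. -/
/-!
With `z = -α`, `(-1)ⁿ C(α, n) = z(z+1)⋯(z+n-1)/n! = nᶻ / ((n + z) · GammaSeq z n)`, where
`GammaSeq z n = nᶻ n!/(z(z+1)⋯(z+n))` is Gauss's sequence converging to `Γ(z)`. Hence the ratio
equals `Γ(z) · n/(n + z) / GammaSeq z n`, which tends to `Γ(z)/Γ(z) = 1` because `Γ(z) ≠ 0`.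
-/

/-- Generalized binomial coefficient `C(z, n) = z(z-1)⋯(z-n+1)/n!` for complex `z`. -/
noncomputable def genBinom (z : ℂ) (n : ℕ) : ℂ :=
  (∏ i ∈ Finset.range n, (z - i)) / (n.factorial : ℂ)

open Filter Topology Finset

theorem neg_one_pow_mul_genBinom_neg (z : ℂ) (n : ℕ) :
    (-1) ^ n * genBinom (-z) n = (∏ j ∈ range n, (z + j)) / n.factorial := by
  rw [genBinom, mul_div_assoc']
  congr 1
  simpa [add_comm] using (prod_neg (s := range n) fun j : ℕ => -z - j).symm

theorem Complex.GammaSeq_eq_cpow_div_genBinom (z : ℂ) (n : ℕ) :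
    Complex.GammaSeq z n = (n : ℂ) ^ z / ((n + z) * ((-1) ^ n * genBinom (-z) n)) := by
  rw [neg_one_pow_mul_genBinom_neg, Complex.GammaSeq, prod_range_succ, mul_div_assoc',
    div_div_eq_mul_div, add_comm (n : ℂ) z, mul_comm (z + n)]

/-- `(-1)^n C(α,n) ∼ n^{-α-1}/Γ(-α)` as `n → ∞`, when `α` is not a nonnegative integer. -/
theorem stmt_4 (α : ℂ) (h : ∀ m : ℕ, α ≠ m) :
    Filter.Tendsto
      (fun n : ℕ => ((-1) ^ n * genBinom α n) / ((n : ℂ) ^ (-α - 1) / Complex.Gamma (-α)))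
      Filter.atTop (nhds 1) := by
  obtain ⟨z, rfl⟩ : ∃ z, α = -z := ⟨-α, (neg_neg α).symm⟩
  have hΓ : Complex.Gamma z ≠ 0 :=
    Complex.Gamma_ne_zero fun m hm => h m (by rw [hm, neg_neg])
  have hlim := ((tendsto_natCast_div_add_atTop z).const_mul (Complex.Gamma z)).div
    (Complex.GammaSeq_tendsto_Gamma z) hΓ
  rw [mul_one, div_self hΓ] at hlim
  refine hlim.congr' ?_
  filter_upwards [eventually_ne_atTop 0] with n hn
  have hnz : (n : ℂ) + z ≠ 0 := fun hnz => h n (by linear_combination -hnz)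
  simp only [Pi.div_apply]
  rw [Complex.GammaSeq_eq_cpow_div_genBinom, neg_neg, sub_eq_add_neg,
    Complex.cpow_add _ _ (Nat.cast_ne_zero.mpr hn), Complex.cpow_neg_one]
  field_simp
end

section
/- The integral operator (Tu)(x) = ∫₀^∞ K(t) u(t)/(t + x) dt, with K(t) = (1/π) exp(-t^β sin(πβ/2)) sin(t^β cos(πβ/2)) and 0 < β < 1, is a Hilbert–Schmidt (hence compact) operator on L²[0, ∞); i.e., the kernel K(t)/(t+x) is square-integrable on [0,∞)×[0,∞). -/
open MeasureTheory

/-- The Freud-model kernel `K(t) = (1/π) e^{-t^β sin(πβ/2)} sin(t^β cos(πβ/2))`. -/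
noncomputable def freudKer (β t : ℝ) : ℝ :=
  (1 / Real.pi) * Real.exp (-t ^ β * Real.sin (Real.pi * β / 2)) *
    Real.sin (t ^ β * Real.cos (Real.pi * β / 2))

/-!
Integrating out `x` first, `∫₀^∞ (t + x)⁻² dx = 1/t`, so by Tonelli the kernel `g(t)/(t + x)` is
square-integrable on the quadrant as soon as `g(t)²/t` is integrable on `(0, ∞)`. For `g = K`,
`|sin y| ≤ |y|` gives `K(t)²/t ≤ π⁻² t^(2β-1) e^(-2 sin(πβ/2) t^β)`, which is integrable since
`2β - 1 > -1` and `sin(πβ/2) > 0`.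
-/

open Set Filter Real

section StieltjesKernel

variable {t : ℝ}

lemma hasDerivAt_neg_inv_add (ht : 0 < t) {x : ℝ} (hx : x ∈ Ici 0) :
    HasDerivAt (fun y => -(t + y)⁻¹) ((t + x) ^ 2)⁻¹ x := by
  have hne : t + x ≠ 0 := by linarith [mem_Ici.mp hx]
  exact (((hasDerivAt_id x).const_add t).inv hne).neg.congr_deriv (by simp [neg_div])

lemma tendsto_neg_inv_add_atTop : Tendsto (fun y => -(t + y)⁻¹) atTop (nhds 0) := by
  simpa using (tendsto_inv_atTop_zero.comp (tendsto_atTop_add_const_left atTop t tendsto_id)).neg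

lemma integrableOn_inv_add_sq (ht : 0 < t) : IntegrableOn (fun x => ((t + x) ^ 2)⁻¹) (Ioi 0) :=
  integrableOn_Ioi_deriv_of_nonneg' (fun _ hx => hasDerivAt_neg_inv_add ht hx)
    (fun _ _ => by positivity) tendsto_neg_inv_add_atTop

lemma integral_inv_add_sq (ht : 0 < t) : ∫ x in Ioi 0, ((t + x) ^ 2)⁻¹ = t⁻¹ := by
  simpa using integral_Ioi_of_hasDerivAt_of_nonneg' (fun _ hx => hasDerivAt_neg_inv_add ht hx)
    (fun _ _ => by positivity) tendsto_neg_inv_add_atTop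

end StieltjesKernel

theorem integrable_sq_div_add_of_integrableOn_sq_div {g : ℝ → ℝ} (hg : Measurable g)
    (h : IntegrableOn (fun t => g t ^ 2 / t) (Ioi 0)) :
    Integrable (fun p : ℝ × ℝ => (g p.1 / (p.1 + p.2)) ^ 2)
      ((volume.restrict (Ioi 0)).prod (volume.restrict (Ioi 0))) := by
  have hsplit (t x : ℝ) : (g t / (t + x)) ^ 2 = g t ^ 2 * ((t + x) ^ 2)⁻¹ := by
    rw [div_pow, div_eq_mul_inv]
  rw [integrable_prod_iff (by fun_prop : Measurable _).aestronglyMeasurable]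
  refine ⟨?_, h.congr ?_⟩
  · filter_upwards [ae_restrict_mem measurableSet_Ioi] with t ht
    simpa only [hsplit] using (integrableOn_inv_add_sq ht).const_mul (g t ^ 2)
  · filter_upwards [ae_restrict_mem measurableSet_Ioi] with t ht
    simp_rw [norm_of_nonneg (sq_nonneg _), hsplit]
    rw [integral_const_mul, integral_inv_add_sq ht, div_eq_mul_inv]

lemma measurable_freudKer (β : ℝ) : Measurable (freudKer β) := by
  unfold freudKer; fun_prop

lemma abs_freudKer_le {β t : ℝ} (ht : 0 ≤ t) :
    |freudKer β t| ≤ π⁻¹ * exp (-t ^ β * sin (π * β / 2)) * t ^ β := by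
  have hu : 0 ≤ t ^ β := rpow_nonneg ht β
  have hsin : |sin (t ^ β * cos (π * β / 2))| ≤ t ^ β := by
    refine abs_sin_le_abs.trans ?_
    rw [abs_mul, abs_of_nonneg hu]
    exact mul_le_of_le_one_right hu (abs_cos_le_one _)
  unfold freudKer
  rw [abs_mul, abs_mul, abs_of_pos (exp_pos _), abs_of_pos (by positivity), one_div]
  gcongr

lemma freudKer_sq_div_le {β t : ℝ} (ht : 0 < t) :
    freudKer β t ^ 2 / t ≤ π⁻¹ ^ 2 * (t ^ (2 * β - 1) * exp (-(2 * sin (π * β / 2)) * t ^ β)) := by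
  have hsq : freudKer β t ^ 2 ≤ (π⁻¹ * exp (-t ^ β * sin (π * β / 2)) * t ^ β) ^ 2 := by
    rw [← sq_abs]
    exact pow_le_pow_left₀ (abs_nonneg _) (abs_freudKer_le ht.le) 2
  have hpow : (t ^ β) ^ 2 / t = t ^ (2 * β - 1) := by
    rw [← rpow_natCast, ← rpow_mul ht.le, rpow_sub ht, rpow_one]
    push_cast; ring_nf
  have hexp : exp (-t ^ β * sin (π * β / 2)) ^ 2 = exp (-(2 * sin (π * β / 2)) * t ^ β) := by
    rw [← exp_nat_mul]; push_cast; ring_nf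
  calc freudKer β t ^ 2 / t
      ≤ (π⁻¹ * exp (-t ^ β * sin (π * β / 2)) * t ^ β) ^ 2 / t := by gcongr
    _ = π⁻¹ ^ 2 * ((t ^ β) ^ 2 / t * exp (-t ^ β * sin (π * β / 2)) ^ 2) := by ring
    _ = _ := by rw [hpow, hexp]

lemma integrableOn_freudKer_sq_div {β : ℝ} (hβ : β ∈ Ioo 0 1) :
    IntegrableOn (fun t => freudKer β t ^ 2 / t) (Ioi 0) := by
  obtain ⟨hβ0, hβ1⟩ := hβ
  have hsin : 0 < sin (π * β / 2) :=
    sin_pos_of_pos_of_lt_pi (by positivity) (by nlinarith [pi_pos])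
  refine Integrable.mono' ((integrableOn_rpow_mul_exp_neg_mul_rpow (s := 2 * β - 1)
    (by linarith) hβ0 (by linarith : 0 < 2 * sin (π * β / 2))).const_mul (π⁻¹ ^ 2))
    (((measurable_freudKer β).pow_const 2).div measurable_id).aestronglyMeasurable ?_
  filter_upwards [ae_restrict_mem measurableSet_Ioi] with t (ht : 0 < t)
  rw [Real.norm_eq_abs, abs_of_nonneg (by positivity)]
  exact freudKer_sq_div_le ht

/-- The kernel `K(t)/(t+x)` of the operator `T` is square-integrable on
`[0,∞) × [0,∞)`, so `T` is Hilbert–Schmidt on `L²[0,∞)`. -/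
theorem stmt_13 (β : ℝ) (hβ : β ∈ Set.Ioo (0 : ℝ) 1) :
    Integrable (fun p : ℝ × ℝ => (freudKer β p.1 / (p.1 + p.2)) ^ 2)
      ((volume.restrict (Set.Ioi (0 : ℝ))).prod (volume.restrict (Set.Ioi (0 : ℝ)))) :=
  integrable_sq_div_add_of_integrableOn_sq_div (measurable_freudKer β)
    (integrableOn_freudKer_sq_div hβ)
end

section
/- The constants γ_{k,s} = ∫₀^∞ (ln t)^k / (t+1)^{s+2} dt satisfy γ_{0,s} = 1/(s+1) and γ_{1,s} = -(1/(s+1)) ∑_{i=1}^{s} 1/i for every natural number s. -/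
/-!
Both integrands have explicit primitives on `(0, ∞)`: `-(t+1)^{-(s+1)}/(s+1)` for `k = 0`, and
for `k = 1` the function `primitiveLogDiv s`, whose derivative collapses to `log t/(t+1)^{s+2}`
through a finite geometric sum in `(t+1)⁻¹`. Each `γ` is then `F(∞) - F(0)`. Integrability of
the `k = 1` integrand also comes from its primitive, since the integrand is `≤ 0` on `(0, 1)` and
`≥ 0` on `(1, ∞)`.
-/

open MeasureTheory

/-- `γ_{k,s} = ∫₀^∞ (ln t)^k / (t+1)^{s+2} dt`. -/
noncomputable def gammaKS (k s : ℕ) : ℝ :=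
  ∫ t in Set.Ioi (0 : ℝ), (Real.log t) ^ k / (t + 1) ^ (s + 2)

open Filter Topology Set

lemma integrableOn_Ioi_deriv_of_nonpos_of_nonneg {g g' : ℝ → ℝ} {a b l : ℝ} (hab : a < b)
    (hcont : ContinuousWithinAt g (Ici a) a) (hderiv : ∀ x ∈ Ioi a, HasDerivAt g (g' x) x)
    (hnonpos : ∀ x ∈ Ioo a b, g' x ≤ 0) (hnonneg : ∀ x ∈ Ioi b, 0 ≤ g' x)
    (hg : Tendsto g atTop (𝓝 l)) : IntegrableOn g' (Ioi a) := by
  rw [← Ioc_union_Ioi_eq_Ioi hab.le]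
  refine IntegrableOn.union ?_ ?_
  · have hcontOn : ContinuousOn (-g) (Icc a b) := fun x hx =>
      (hx.1.eq_or_lt.elim (fun h => h ▸ hcont.mono Icc_subset_Ici_self)
        fun h => (hderiv x h).continuousAt.continuousWithinAt).neg
    simpa using (intervalIntegral.integrableOn_deriv_of_nonneg hcontOn
      (fun x hx => (hderiv x hx.1).neg) fun x hx => neg_nonneg.2 (hnonpos x hx)).neg
  · exact integrableOn_Ioi_deriv_of_nonneg' (fun x hx => hderiv x (hab.trans_le hx)) hnonneg hg

lemma sum_Icc_inv_pow_succ {K : Type*} [Field K] (s : ℕ) {t : K} (ht : t ≠ 0)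
    (ht₁ : t + 1 ≠ 0) :
    ∑ i ∈ Finset.Icc 1 s, ((t + 1) ^ (i + 1))⁻¹ = (1 - ((t + 1) ^ (s + 1))⁻¹) / t - (t + 1)⁻¹ := by
  induction s with
  | zero => rw [Finset.Icc_eq_empty_of_lt zero_lt_one, Finset.sum_empty]; field_simp; ring
  | succ n ih =>
    rw [Finset.sum_Icc_succ_top (by omega), ih]
    field_simp
    ring

lemma hasDerivAt_inv_add_one_pow (n : ℕ) {t : ℝ} (ht : t + 1 ≠ 0) :
    HasDerivAt (fun t : ℝ => ((t + 1) ^ n)⁻¹) (-(n * ((t + 1) ^ (n + 1))⁻¹)) t := by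
  refine ((((hasDerivAt_id' t).add_const 1).fun_pow n).fun_inv (pow_ne_zero n ht)).congr_deriv ?_
  cases n with
  | zero => simp
  | succ n => simp only [add_tsub_cancel_right, mul_one]; field_simp; ring

lemma tendsto_inv_add_one_pow_atTop {n : ℕ} (hn : n ≠ 0) :
    Tendsto (fun t : ℝ => ((t + 1) ^ n)⁻¹) atTop (𝓝 0) :=
  ((tendsto_pow_atTop hn).comp (tendsto_atTop_add_const_right _ 1 tendsto_id)).inv_tendsto_atTop

/- The factor `1 - (t+1)^{-(s+1)}` vanishes at `0` and tames the `log t` singularity there, while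
`-log (t+1)` cancels the growth of `log t` at infinity. -/
noncomputable def primitiveLogDiv (s : ℕ) (t : ℝ) : ℝ :=
  (∑ i ∈ Finset.Icc 1 s, ((t + 1) ^ i)⁻¹ / i + Real.log t * (1 - ((t + 1) ^ (s + 1))⁻¹)
    - Real.log (t + 1)) / (s + 1)

lemma hasDerivAt_primitiveLogDiv (s : ℕ) {t : ℝ} (ht : 0 < t) :
    HasDerivAt (primitiveLogDiv s) (Real.log t / (t + 1) ^ (s + 2)) t := by
  have ht₁ : t + 1 ≠ 0 := by positivity
  have hsum : HasDerivAt (fun t : ℝ => ∑ i ∈ Finset.Icc 1 s, ((t + 1) ^ i)⁻¹ / i)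
      (-∑ i ∈ Finset.Icc 1 s, ((t + 1) ^ (i + 1))⁻¹) t := by
    rw [← Finset.sum_neg_distrib]
    refine HasDerivAt.fun_sum fun i hi => ?_
    have hi : (i : ℝ) ≠ 0 := by have := (Finset.mem_Icc.1 hi).1; positivity
    exact ((hasDerivAt_inv_add_one_pow i ht₁).div_const (i : ℝ)).congr_deriv (by field_simp)
  have hlog := (Real.hasDerivAt_log ht.ne').mul
    ((hasDerivAt_inv_add_one_pow (s + 1) ht₁).const_sub 1)
  have hlog₁ := ((hasDerivAt_id' t).add_const 1).log ht₁
  refine (((hsum.add hlog).sub hlog₁).div_const _).congr_deriv ?_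
  rw [sum_Icc_inv_pow_succ s ht.ne' ht₁]
  push_cast
  field_simp
  ring

lemma tendsto_log_mul_inv_add_one_pow_atTop (n : ℕ) :
    Tendsto (fun t : ℝ => Real.log t * ((t + 1) ^ (n + 1))⁻¹) atTop (𝓝 0) := by
  have hlin : Tendsto (fun t : ℝ => Real.log t ^ 1 / (1 * t + 1)) atTop (𝓝 0) :=
    Real.tendsto_pow_log_div_mul_add_atTop 1 1 1 one_ne_zero
  refine squeeze_zero' ?_ ?_ hlin
  · filter_upwards [eventually_ge_atTop 1] with t ht
    have := Real.log_nonneg ht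
    positivity
  · filter_upwards [eventually_ge_atTop 1] with t ht
    rw [pow_one, one_mul, div_eq_mul_inv]
    gcongr
    · exact Real.log_nonneg ht
    · exact le_self_pow₀ (by linarith) (by omega)

lemma tendsto_primitiveLogDiv_atTop (s : ℕ) : Tendsto (primitiveLogDiv s) atTop (𝓝 0) := by
  have hsum : Tendsto (fun t : ℝ => ∑ i ∈ Finset.Icc 1 s, ((t + 1) ^ i)⁻¹ / i) atTop (𝓝 0) := by
    rw [← Finset.sum_const_zero]
    refine tendsto_finsetSum _ fun i hi => ?_
    have hi : i ≠ 0 := by have := (Finset.mem_Icc.1 hi).1; omega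
    simpa using (tendsto_inv_add_one_pow_atTop hi).div_const (i : ℝ)
  have hlim := ((hsum.sub (tendsto_log_mul_inv_add_one_pow_atTop s)).sub
    (Real.tendsto_log_comp_add_sub_log 1)).div_const ((s : ℝ) + 1)
  simp only [sub_zero, zero_div] at hlim
  refine hlim.congr' ?_
  filter_upwards with t
  simp only [primitiveLogDiv]
  ring

lemma continuousAt_log_mul_one_sub_inv_add_one_pow_zero (n : ℕ) :
    ContinuousAt (fun t : ℝ => Real.log t * (1 - ((t + 1) ^ n)⁻¹)) 0 := by
  have hO : (fun t : ℝ => 1 - ((t + 1) ^ n)⁻¹) =O[𝓝 0] fun t => t := by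
    simpa using ((hasDerivAt_inv_add_one_pow n (t := 0) (by norm_num)).const_sub 1).isBigO_sub
  simp only [ContinuousAt, Real.log_zero, zero_mul]
  refine ((Asymptotics.isBigO_refl Real.log _).mul hO).trans_tendsto ?_
  simpa [mul_comm] using Real.continuous_mul_log.tendsto 0

lemma continuousAt_primitiveLogDiv_zero (s : ℕ) : ContinuousAt (primitiveLogDiv s) 0 := by
  have hsum : ContinuousAt (fun t : ℝ => ∑ i ∈ Finset.Icc 1 s, ((t + 1) ^ i)⁻¹ / i) 0 := by
    fun_prop (disch := norm_num)
  have hlog₁ : ContinuousAt (fun t : ℝ => Real.log (t + 1)) 0 := by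
    fun_prop (disch := norm_num)
  exact ((hsum.add (continuousAt_log_mul_one_sub_inv_add_one_pow_zero (s + 1))).sub
    hlog₁).div_const _

lemma primitiveLogDiv_zero (s : ℕ) :
    primitiveLogDiv s 0 = (∑ i ∈ Finset.Icc 1 s, 1 / (i : ℝ)) / (s + 1) := by
  simp [primitiveLogDiv]

lemma gammaKS_zero (s : ℕ) : gammaKS 0 s = 1 / ((s : ℝ) + 1) := by
  have hderiv : ∀ t ∈ Ici (0 : ℝ), HasDerivAt (fun t : ℝ => -((t + 1) ^ (s + 1))⁻¹ / (s + 1))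
      (Real.log t ^ 0 / (t + 1) ^ (s + 2)) t := fun t ht => by
    have ht₁ : t + 1 ≠ 0 := by have : (0 : ℝ) ≤ t := ht; positivity
    refine ((hasDerivAt_inv_add_one_pow (s + 1) ht₁).neg.div_const _).congr_deriv ?_
    push_cast
    field_simp
  have hlim := (tendsto_inv_add_one_pow_atTop (Nat.succ_ne_zero s)).neg.div_const ((s : ℝ) + 1)
  rw [neg_zero, zero_div] at hlim
  rw [gammaKS, integral_Ioi_of_hasDerivAt_of_nonneg' hderiv
    (fun t ht => by have : (0 : ℝ) < t := ht; positivity) hlim]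
  simp only [zero_add, one_pow, inv_one]
  ring

lemma gammaKS_one (s : ℕ) :
    gammaKS 1 s = -(1 / ((s : ℝ) + 1)) * ∑ i ∈ Finset.Icc 1 s, (1 / (i : ℝ)) := by
  have hderiv : ∀ t ∈ Ioi (0 : ℝ),
      HasDerivAt (primitiveLogDiv s) (Real.log t ^ 1 / (t + 1) ^ (s + 2)) t := fun t ht => by
    simpa using hasDerivAt_primitiveLogDiv s ht
  have hint : IntegrableOn (fun t : ℝ => Real.log t ^ 1 / (t + 1) ^ (s + 2)) (Ioi 0) :=
    integrableOn_Ioi_deriv_of_nonpos_of_nonneg zero_lt_one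
      (continuousAt_primitiveLogDiv_zero s).continuousWithinAt hderiv
      (fun t ht => div_nonpos_of_nonpos_of_nonneg (by simpa using Real.log_nonpos ht.1.le ht.2.le)
        (by have := ht.1; positivity))
      (fun t ht => div_nonneg (by simpa using Real.log_nonneg (le_of_lt ht))
        (by have : (1 : ℝ) < t := ht; positivity))
      (tendsto_primitiveLogDiv_atTop s)
  rw [gammaKS, integral_Ioi_of_hasDerivAt_of_tendsto
    (continuousAt_primitiveLogDiv_zero s).continuousWithinAt hderiv hint
    (tendsto_primitiveLogDiv_atTop s), primitiveLogDiv_zero]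
  ring

/-- `γ_{0,s} = 1/(s+1)` and `γ_{1,s} = -(1/(s+1)) ∑_{i=1}^s 1/i`. -/
theorem stmt_17 (s : ℕ) :
    gammaKS 0 s = 1 / ((s : ℝ) + 1) ∧
    gammaKS 1 s = -(1 / ((s : ℝ) + 1)) * ∑ i ∈ Finset.Icc 1 s, (1 / (i : ℝ)) :=
  ⟨gammaKS_zero s, gammaKS_one s⟩
end

section
/- The constants γ_{k,s} = ∫₀^∞ (ln t)^k/(t+1)^{s+2} dt satisfy the recursion γ_{k,s} = ([1 + (-1)^k] k!/(s+1)) ∑_{i=1}^∞ (-1)^{i-1}/i^k - (k/(s+1)) ∑_{i=1}^s γ_{k-1, i-1} for k ≥ 1 and s ≥ 0. -/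
open MeasureTheory

/-!
Integrating by parts against `v t = t / (t+1)^(s+2)`, which vanishes at both ends of `(0, ∞)` and
has `v' t = (s+2)/(t+1)^(s+3) - (s+1)/(t+1)^(s+2)`, gives
`(s+2) γ_{k+1,s+1} = (s+1) γ_{k+1,s} - (k+1) γ_{k,s}`; telescoping in `s` leaves only `γ_{k,0}`.

Under `t ↦ 1/t` the integrand `(ln t)^k/(t+1)^2` of `γ_{k,0}` picks up the sign `(-1)^k` while
`(0,1)` and `(1,∞)` are exchanged, so `γ_{k,0} = (1 + (-1)^k) ∫₁^∞ (ln t)^k/(t+1)^2 dt`.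
After `t = eˣ` this is an integral of `x^k e^{-x}/(1+e^{-x})^2 = ∑ (-1)^n (n+1) x^k e^{-(n+1)x}`,
and Euler's integral `∫₀^∞ x^k e^{-cx} dx = k!/c^{k+1}` evaluates it termwise; the series of
norms converges for `k ≥ 2`, and for `k = 1` the prefactor `1 + (-1)^k` vanishes.
-/

open Real Set Filter Topology

theorem integrableOn_pow_mul_exp_neg_mul (k : ℕ) {c : ℝ} (hc : 0 < c) :
    IntegrableOn (fun x : ℝ => x ^ k * exp (-(c * x))) (Ioi 0) := by
  refine (integrableOn_rpow_mul_exp_neg_mul_rpow (s := k) (p := 1)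
    (by linarith [k.cast_nonneg (α := ℝ)]) one_pos hc).congr_fun (fun x _ => ?_) measurableSet_Ioi
  simp [rpow_natCast]

theorem integral_pow_mul_exp_neg_mul (k : ℕ) {c : ℝ} (hc : 0 < c) :
    ∫ x in Ioi (0 : ℝ), x ^ k * exp (-(c * x)) = k.factorial / c ^ (k + 1) := by
  have h := integral_rpow_mul_exp_neg_mul_Ioi (a := k + 1) (by positivity) hc
  rw [add_sub_cancel_right, Gamma_nat_eq_factorial, ← Nat.cast_add_one, rpow_natCast] at h
  simp_rw [rpow_natCast] at h
  rw [h, one_div, inv_pow]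
  ring

section Inversion

variable {E : Type*} [NormedAddCommGroup E] [NormedSpace ℝ E]

open scoped Pointwise in
theorem image_inv_Ioo_zero_one : (fun x : ℝ => x⁻¹) '' Ioo 0 1 = Ioi 1 := by
  rw [image_inv_eq_inv, inv_Ioo_0_left one_pos, inv_one]

theorem hasDerivWithinAt_inv_Ioo_zero_one {u : ℝ} (hu : u ∈ Ioo (0 : ℝ) 1) :
    HasDerivWithinAt (fun x : ℝ => x⁻¹) (-(u ^ 2)⁻¹) (Ioo 0 1) u :=
  (hasDerivAt_inv hu.1.ne').hasDerivWithinAt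

theorem integrableOn_Ioi_one_iff_comp_inv (g : ℝ → E) :
    IntegrableOn g (Ioi 1) ↔ IntegrableOn (fun u => (u ^ 2)⁻¹ • g u⁻¹) (Ioo 0 1) := by
  rw [← image_inv_Ioo_zero_one, integrableOn_image_iff_integrableOn_abs_deriv_smul
    measurableSet_Ioo (fun _ => hasDerivWithinAt_inv_Ioo_zero_one) inv_injective.injOn]
  refine integrableOn_congr_fun (fun u hu => ?_) measurableSet_Ioo
  rw [abs_neg, abs_of_pos (by have := hu.1; positivity)]

theorem integral_Ioi_one_eq_integral_comp_inv (g : ℝ → E) :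
    ∫ t in Ioi 1, g t = ∫ u in Ioo 0 1, (u ^ 2)⁻¹ • g u⁻¹ := by
  rw [← image_inv_Ioo_zero_one, integral_image_eq_integral_abs_deriv_smul
    measurableSet_Ioo (fun _ => hasDerivWithinAt_inv_Ioo_zero_one) inv_injective.injOn]
  refine setIntegral_congr_fun measurableSet_Ioo (fun u hu => ?_)
  rw [abs_neg, abs_of_pos (by have := hu.1; positivity)]

end Inversion

theorem inv_sq_mul_log_pow_div_inv_add_one_sq (k : ℕ) {u : ℝ} (hu : 0 < u) :
    (u ^ 2)⁻¹ * (log u⁻¹ ^ k / (u⁻¹ + 1) ^ 2) = (-1) ^ k * (log u ^ k / (u + 1) ^ 2) := by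
  rw [log_inv, neg_pow]
  field_simp
  ring

theorem integrableOn_log_pow_div_add_one_sq_Ioi_one (k : ℕ) :
    IntegrableOn (fun t => log t ^ k / (t + 1) ^ 2) (Ioi 1) := by
  have h := integrableOn_comp_exp_Ioi (fun t => log t ^ k / (t + 1) ^ 2) 0
  rw [exp_zero] at h
  refine h.mp <| (integrableOn_pow_mul_exp_neg_mul k one_pos).mono' (by fun_prop) ?_
  filter_upwards [ae_restrict_mem measurableSet_Ioi] with x (hx : 0 < x)
  have hex : exp x ≤ exp x + 1 := by linarith
  rw [log_exp, smul_eq_mul, one_mul, exp_neg, norm_mul, norm_div, norm_pow, norm_pow,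
    Real.norm_of_nonneg hx.le, Real.norm_of_nonneg (exp_pos x).le,
    Real.norm_of_nonneg (by positivity : 0 ≤ exp x + 1)]
  calc exp x * (x ^ k / (exp x + 1) ^ 2) ≤ exp x * (x ^ k / exp x ^ 2) := by gcongr
    _ = x ^ k * (exp x)⁻¹ := by field_simp

theorem integrableOn_log_pow_div_add_one_sq (k : ℕ) :
    IntegrableOn (fun t => log t ^ k / (t + 1) ^ 2) (Ioi 0) := by
  have h1 := integrableOn_log_pow_div_add_one_sq_Ioi_one k
  have h0 : IntegrableOn (fun t => log t ^ k / (t + 1) ^ 2) (Ioo 0 1) := by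
    rw [integrableOn_Ioi_one_iff_comp_inv] at h1
    refine IntegrableOn.congr_fun (h1.const_mul ((-1) ^ k)) (fun u hu => ?_) measurableSet_Ioo
    rw [smul_eq_mul, inv_sq_mul_log_pow_div_inv_add_one_sq k hu.1, ← mul_assoc, ← mul_pow]
    norm_num
  rw [← Ioc_union_Ioi_eq_Ioi zero_le_one]
  exact ((integrableOn_Ioc_iff_integrableOn_Ioo).mpr h0).union h1

theorem integrableOn_log_pow_div_add_one_pow (k : ℕ) {p : ℕ} (hp : 2 ≤ p) :
    IntegrableOn (fun t => log t ^ k / (t + 1) ^ p) (Ioi 0) := by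
  refine (integrableOn_log_pow_div_add_one_sq k).norm.mono'
    (Measurable.aestronglyMeasurable (by fun_prop)) ?_
  filter_upwards [ae_restrict_mem measurableSet_Ioi] with t (ht : 0 < t)
  simp only [norm_div, norm_pow, Real.norm_of_nonneg (by positivity : 0 ≤ t + 1)]
  gcongr
  linarith

theorem tendsto_abs_log_pow_div_atTop (n : ℕ) :
    Tendsto (fun t => |log t| ^ n / t) atTop (𝓝 0) := by
  have h := (tendsto_pow_log_div_mul_add_atTop 1 0 n one_ne_zero).abs
  rw [abs_zero] at h
  refine h.congr' ?_
  filter_upwards [eventually_gt_atTop 0] with t ht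
  rw [one_mul, add_zero, abs_div, abs_pow, abs_of_pos ht]

theorem tendsto_abs_log_pow_mul_nhdsGT_zero (n : ℕ) :
    Tendsto (fun t => |log t| ^ n * t) (𝓝[>] 0) (𝓝 0) := by
  refine ((tendsto_abs_log_pow_div_atTop n).comp tendsto_inv_nhdsGT_zero).congr' ?_
  filter_upwards [self_mem_nhdsWithin] with t _
  simp [log_inv, div_eq_mul_inv]

theorem norm_log_pow_mul_div_add_one_pow (n p : ℕ) {t : ℝ} (ht : 0 < t) :
    ‖log t ^ n * (t / (t + 1) ^ p)‖ = |log t| ^ n * (t / (t + 1) ^ p) := by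
  rw [norm_mul, norm_pow, Real.norm_eq_abs, Real.norm_of_nonneg (by positivity)]

theorem tendsto_log_pow_mul_div_add_one_pow_nhdsGT_zero (n p : ℕ) :
    Tendsto (fun t => log t ^ n * (t / (t + 1) ^ p)) (𝓝[>] 0) (𝓝 0) := by
  refine squeeze_zero_norm' ?_ (tendsto_abs_log_pow_mul_nhdsGT_zero n)
  filter_upwards [self_mem_nhdsWithin] with t (ht : 0 < t)
  rw [norm_log_pow_mul_div_add_one_pow n p ht]
  gcongr
  exact div_le_self ht.le (one_le_pow₀ (by linarith))

theorem tendsto_log_pow_mul_div_add_one_pow_atTop (n : ℕ) {p : ℕ} (hp : 2 ≤ p) :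
    Tendsto (fun t => log t ^ n * (t / (t + 1) ^ p)) atTop (𝓝 0) := by
  refine squeeze_zero_norm' ?_ (tendsto_abs_log_pow_div_atTop n)
  filter_upwards [eventually_gt_atTop 0] with t ht
  rw [norm_log_pow_mul_div_add_one_pow n p ht, div_eq_mul_one_div _ t]
  refine mul_le_mul_of_nonneg_left ?_ (by positivity)
  rw [div_le_div_iff₀ (by positivity) ht, ← sq, one_mul]
  calc t ^ 2 ≤ (t + 1) ^ 2 := by gcongr; linarith
    _ ≤ (t + 1) ^ p := pow_le_pow_right₀ (by linarith) hp

theorem hasDerivAt_div_add_one_pow (p : ℕ) {t : ℝ} (ht : 0 < t) :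
    HasDerivAt (fun x => x / (x + 1) ^ (p + 1))
      ((p + 1) / (t + 1) ^ (p + 2) - p / (t + 1) ^ (p + 1)) t := by
  have h := (hasDerivAt_id' t).fun_div (((hasDerivAt_id' t).add_const 1).fun_pow (p + 1))
    (by positivity)
  refine h.congr_deriv ?_
  rw [Nat.add_sub_cancel, Nat.cast_add_one]
  field_simp
  ring

theorem gammaKS_succ_right (k s : ℕ) :
    ((s : ℝ) + 2) * gammaKS (k + 1) (s + 1) =
      ((s : ℝ) + 1) * gammaKS (k + 1) s - ((k : ℝ) + 1) * gammaKS k s := by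
  have hu : ∀ t ∈ Ioi (0 : ℝ), HasDerivAt (fun x => log x ^ (k + 1))
      ((k + 1) * log t ^ k / t) t := fun t ht => by
    simpa [div_eq_mul_inv, mul_assoc] using (hasDerivAt_log (ne_of_gt ht)).fun_pow (k + 1)
  have hv : ∀ t ∈ Ioi (0 : ℝ), HasDerivAt (fun x => x / (x + 1) ^ (s + 2))
      ((s + 2) / (t + 1) ^ (s + 3) - (s + 1) / (t + 1) ^ (s + 2)) t := fun t ht => by
    simpa [add_assoc, one_add_one_eq_two] using hasDerivAt_div_add_one_pow (s + 1) ht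
  have hI₁ := integrableOn_log_pow_div_add_one_pow (k + 1) (p := s + 3) (by omega)
  have hI₂ := integrableOn_log_pow_div_add_one_pow (k + 1) (p := s + 2) (by omega)
  have hI₃ := integrableOn_log_pow_div_add_one_pow k (p := s + 2) (by omega)
  have huv' : (fun t => log t ^ (k + 1) *
      ((s + 2) / (t + 1) ^ (s + 3) - (s + 1) / (t + 1) ^ (s + 2))) =
      fun t => (s + 2) * (log t ^ (k + 1) / (t + 1) ^ (s + 3)) -
        (s + 1) * (log t ^ (k + 1) / (t + 1) ^ (s + 2)) := by
    ext t; ring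
  have huv'_int : IntegrableOn (fun t => log t ^ (k + 1) *
      ((s + 2) / (t + 1) ^ (s + 3) - (s + 1) / (t + 1) ^ (s + 2))) (Ioi 0) := by
    rw [huv']; exact (hI₁.const_mul _).sub (hI₂.const_mul _)
  have hu'v : EqOn (fun t => (k + 1) * log t ^ k / t * (t / (t + 1) ^ (s + 2)))
      (fun t => (k + 1) * (log t ^ k / (t + 1) ^ (s + 2))) (Ioi 0) := fun t ht => by
    have : t ≠ 0 := ne_of_gt ht
    field_simp
  have key := integral_Ioi_mul_deriv_eq_deriv_mul hu hv huv'_int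
    (IntegrableOn.congr_fun (hI₃.const_mul _) hu'v.symm measurableSet_Ioi)
    (tendsto_log_pow_mul_div_add_one_pow_nhdsGT_zero (k + 1) (s + 2))
    (tendsto_log_pow_mul_div_add_one_pow_atTop (k + 1) (p := s + 2) (by omega))
  rw [huv', setIntegral_congr_fun measurableSet_Ioi hu'v, integral_sub (hI₁.const_mul _)
    (hI₂.const_mul _), integral_const_mul, integral_const_mul, integral_const_mul] at key
  unfold gammaKS
  linarith

theorem mul_gammaKS_eq_sub_sum (k s : ℕ) :
    ((s : ℝ) + 1) * gammaKS (k + 1) s =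
      gammaKS (k + 1) 0 - ((k : ℝ) + 1) * ∑ j ∈ Finset.range s, gammaKS k j := by
  induction s with
  | zero => simp
  | succ s ih =>
    rw [Finset.sum_range_succ, Nat.cast_add_one, add_assoc, one_add_one_eq_two,
      gammaKS_succ_right]
    linarith

theorem gammaKS_zero_right_eq_integral_Ioi_one (k : ℕ) :
    gammaKS k 0 = (1 + (-1) ^ k) * ∫ t in Ioi 1, log t ^ k / (t + 1) ^ 2 := by
  have hI := integrableOn_log_pow_div_add_one_sq k
  have hflip : ∫ t in Ioi 1, log t ^ k / (t + 1) ^ 2 =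
      (-1) ^ k * ∫ u in Ioo 0 1, log u ^ k / (u + 1) ^ 2 := by
    rw [integral_Ioi_one_eq_integral_comp_inv, ← integral_const_mul]
    exact setIntegral_congr_fun measurableSet_Ioo fun u hu =>
      inv_sq_mul_log_pow_div_inv_add_one_sq k hu.1
  have hsq : ((-1 : ℝ) ^ k) ^ 2 = 1 := by rw [← pow_mul, mul_comm, pow_mul]; norm_num
  rw [gammaKS, ← Ioc_union_Ioi_eq_Ioi zero_le_one, setIntegral_union Ioc_disjoint_Ioi_same
    measurableSet_Ioi (hI.mono_set Ioc_subset_Ioi_self) (hI.mono_set (Ioi_subset_Ioi zero_le_one)),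
    integral_Ioc_eq_integral_Ioo, hflip]
  linear_combination -(∫ u in Ioo 0 1, log u ^ k / (u + 1) ^ 2) * hsq

theorem hasSum_alternating_mul_pow_mul_exp_neg_mul (k : ℕ) {x : ℝ} (hx : 0 < x) :
    HasSum (fun n : ℕ => (-1) ^ n * (n + 1) * (x ^ k * exp (-((n + 1) * x))))
      (exp x * (x ^ k / (exp x + 1) ^ 2)) := by
  have hr : ‖-exp (-x)‖ < 1 := by
    rw [norm_neg, Real.norm_of_nonneg (exp_pos _).le, exp_lt_one_iff, neg_lt_zero]
    exact hx
  have hsum : (fun n : ℕ => (-1) ^ n * (n + 1) * (x ^ k * exp (-((n + 1) * x)))) =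
      fun n => x ^ k * exp (-x) * ((n + 1).choose 1 * (-exp (-x)) ^ n) := by
    funext n
    rw [Nat.choose_one_right, neg_pow (exp (-x)), ← exp_nat_mul,
      show -((n + 1 : ℝ) * x) = -x + n * -x by ring, exp_add]
    push_cast
    ring
  have hval : exp x * (x ^ k / (exp x + 1) ^ 2) =
      x ^ k * exp (-x) * (1 / (1 - -exp (-x)) ^ (1 + 1)) := by
    have := (exp_pos x).ne'
    rw [exp_neg, sub_neg_eq_add, one_add_one_eq_two]
    field_simp
  rw [hsum, hval]
  exact (hasSum_choose_mul_geometric_of_norm_lt_one 1 hr).mul_left _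

theorem integral_Ioi_one_log_pow_div_add_one_sq {k : ℕ} (hk : 2 ≤ k) :
    ∫ t in Ioi 1, log t ^ k / (t + 1) ^ 2 =
      k.factorial * ∑' n : ℕ, (-1) ^ n / ((n : ℝ) + 1) ^ k := by
  have hexp : ∫ t in Ioi 1, log t ^ k / (t + 1) ^ 2 =
      ∫ x in Ioi 0, exp x * (x ^ k / (exp x + 1) ^ 2) := by
    have h := integral_comp_exp_Ioi (fun t => log t ^ k / (t + 1) ^ 2) 0
    rw [exp_zero] at h
    simp only [log_exp, smul_eq_mul] at h
    exact h.symm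
  set F : ℕ → ℝ → ℝ := fun n x => (-1) ^ n * (n + 1) * (x ^ k * exp (-((n + 1) * x)))
  have hF_int (n : ℕ) : IntegrableOn (F n) (Ioi 0) :=
    (integrableOn_pow_mul_exp_neg_mul k (by positivity)).const_mul _
  have hF_integral (n : ℕ) :
      ∫ x in Ioi 0, F n x = k.factorial * ((-1) ^ n / ((n : ℝ) + 1) ^ k) := by
    rw [integral_const_mul, integral_pow_mul_exp_neg_mul k (by positivity)]
    field_simp
    ring
  have hF_norm (n : ℕ) : ∫ x in Ioi 0, ‖F n x‖ = k.factorial * (1 / ((n : ℝ) + 1) ^ k) := by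
    have h : EqOn (fun x => ‖F n x‖) (fun x => ((n : ℝ) + 1) * (x ^ k * exp (-((n + 1) * x))))
        (Ioi 0) := fun x (hx : 0 < x) => by
      simp only [F, norm_mul, norm_pow, norm_neg, norm_one, one_pow, one_mul,
        Real.norm_of_nonneg (by positivity : (0 : ℝ) ≤ n + 1), Real.norm_of_nonneg hx.le,
        Real.norm_of_nonneg (exp_pos _).le]
    rw [setIntegral_congr_fun measurableSet_Ioi h, integral_const_mul,
      integral_pow_mul_exp_neg_mul k (by positivity)]
    field_simp
    ring
  have hF_summable : Summable fun n => ∫ x in Ioi 0, ‖F n x‖ := by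
    simp_rw [hF_norm]
    refine Summable.mul_left _ ?_
    exact_mod_cast (summable_nat_add_iff 1).mpr (Real.summable_one_div_nat_pow.mpr hk)
  have hF_sum : EqOn (fun x => ∑' n, F n x) (fun x => exp x * (x ^ k / (exp x + 1) ^ 2))
      (Ioi 0) := fun x hx => (hasSum_alternating_mul_pow_mul_exp_neg_mul k hx).tsum_eq
  rw [hexp, ← setIntegral_congr_fun measurableSet_Ioi hF_sum,
    ← integral_tsum_of_summable_integral_norm hF_int hF_summable, tsum_congr hF_integral,
    tsum_mul_left]

theorem gammaKS_zero_right {k : ℕ} (hk : 1 ≤ k) :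
    gammaKS k 0 = (1 + (-1) ^ k) * k.factorial * ∑' n : ℕ, (-1) ^ n / ((n : ℝ) + 1) ^ k := by
  rw [gammaKS_zero_right_eq_integral_Ioi_one]
  rcases hk.eq_or_lt with rfl | hk
  · norm_num
  · rw [integral_Ioi_one_log_pow_div_add_one_sq hk, mul_assoc]

theorem Finset.sum_Icc_one_comp_sub_one {M : Type*} [AddCommMonoid M] (f : ℕ → M) (s : ℕ) :
    ∑ i ∈ Finset.Icc 1 s, f (i - 1) = ∑ j ∈ Finset.range s, f j := by
  rw [Finset.range_eq_Ico, ← Finset.Ico_add_one_right_eq_Icc,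
    ← Finset.sum_Ico_add' (fun i => f (i - 1)) 0 s 1]
  simp

/-- Recursion
`γ_{k,s} = ([1+(-1)^k] k!/(s+1)) ∑_{i≥1} (-1)^{i-1}/i^k - (k/(s+1)) ∑_{i=1}^s γ_{k-1,i-1}`
for `k ≥ 1`. -/
theorem stmt_18 (k s : ℕ) (hk : 1 ≤ k) :
    gammaKS k s =
      ((1 + (-1 : ℝ) ^ k) * (k.factorial : ℝ) / ((s : ℝ) + 1)) *
        (∑' i : ℕ, (-1 : ℝ) ^ i / ((i : ℝ) + 1) ^ k) -
      ((k : ℝ) / ((s : ℝ) + 1)) * ∑ i ∈ Finset.Icc 1 s, gammaKS (k - 1) (i - 1) := by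
  obtain ⟨m, rfl⟩ : ∃ m, k = m + 1 := ⟨k - 1, by omega⟩
  have h := mul_gammaKS_eq_sub_sum m s
  rw [gammaKS_zero_right hk] at h
  rw [Nat.add_sub_cancel, Finset.sum_Icc_one_comp_sub_one (gammaKS m)]
  field_simp
  push_cast
  linear_combination h
end
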